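/- Let N ≥ 2, let a_1, …, a_N be pairwise distinct real numbers, and let (z_1^0, z_2^0, z_3^0) ∈ ℝ³ ∖ {0}. Define F_j(p,q) = ∑_{k ≠ j} (p_k q_j − p_j q_k)^2/(a_k − a_j) for j = 1, …, N−1 and G(p,q) = z_1^0 ∑_j p_j q_j + z_2^0 ∑_j p_j^2 + z_3^0 ∑_j q_j^2. Then the set of points (p,q) ∈ ℝ^N × ℝ^N at which the N differentials dF_1(p,q), …, dF_{N−1}(p,q), dG(p,q) (elements of the dual space of ℝ^{2N}) are linearly independent is open and dense in ℝ^{2N}; i.e. {F_1, …, F_{N−1}, G} is a complete involutive set of functions for the standard Poisson structure on ℝ^{2N}. -/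

import Mathlib

open Finset

/-- The Gaudin function `F_j(p,q) = ∑_{k ≠ j} (p_k q_j − p_j q_k)^2/(a_k − a_j)`. -/
noncomputable def gaudinF (N : ℕ) (a : Fin N → ℝ) (j : Fin N)
    (x : (Fin N → ℝ) × (Fin N → ℝ)) : ℝ :=
  ∑ k ∈ Finset.univ.erase j, (x.1 k * x.2 j - x.1 j * x.2 k) ^ 2 / (a k - a j)

/-- `G(p,q) = z₁⁰ ∑ p_j q_j + z₂⁰ ∑ p_j² + z₃⁰ ∑ q_j²`. -/
noncomputable def gaudinG (N : ℕ) (z₁ z₂ z₃ : ℝ)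
    (x : (Fin N → ℝ) × (Fin N → ℝ)) : ℝ :=
  z₁ * ∑ j, x.1 j * x.2 j + z₂ * ∑ j, (x.1 j) ^ 2 + z₃ * ∑ j, (x.2 j) ^ 2

/-- The family `F_1, …, F_{N−1}, G` indexed by `Fin N`. -/
noncomputable def gaudinFam (N : ℕ) (a : Fin N → ℝ) (z₁ z₂ z₃ : ℝ) (i : Fin N) :
    (Fin N → ℝ) × (Fin N → ℝ) → ℝ :=
  if (i : ℕ) < N - 1 then gaudinF N a i else gaudinG N z₁ z₂ z₃

/-- The set of points where the differentials `dF_1, …, dF_{N−1}, dG` are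
linearly independent. -/
noncomputable def indepSet (N : ℕ) (a : Fin N → ℝ) (z₁ z₂ z₃ : ℝ) :
    Set ((Fin N → ℝ) × (Fin N → ℝ)) :=
  {x | LinearIndependent ℝ fun i : Fin N => fderiv ℝ (gaudinFam N a z₁ z₂ z₃ i) x}

/-!
Linear independence of finitely many analytic covector fields is an open condition, and on a
connected space it holds on a dense set as soon as it holds at one point: pairing with a dual
family at that point gives an analytic determinant that is nonzero there, so its zero set has
empty interior by the identity theorem. The Gaudin functions are polynomials, hence it suffices
to exhibit one point of independence. At `p = a`, `q = (t, …, t)` every quotient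
`(p_k q_j − p_j q_k) / (a_k − a_j)` equals `t`, so the differentials are explicit; a vanishing
combination forces two scalar conditions on `z⁰`, and `t` can be chosen to violate one of them.
-/

section LinearAlgebra

variable {K V ι : Type*} [Field K] [AddCommGroup V] [Module K V]

theorem LinearIndependent.exists_dual_apply_eq_ite [DecidableEq ι] {v : ι → V}
    (hv : LinearIndependent K v) :
    ∃ ℓ : ι → Module.Dual K V, ∀ i j, ℓ i (v j) = if i = j then 1 else 0 := by
  choose ℓ hℓ using fun i => LinearMap.exists_extend ((Module.Basis.span hv).coord i)
  refine ⟨ℓ, fun i j => ?_⟩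
  simpa [Finsupp.single_apply, eq_comm] using LinearMap.congr_fun (hℓ i) (Module.Basis.span hv j)

theorem linearIndependent_of_det_dual_apply_ne_zero [Fintype ι] [DecidableEq ι] {v : ι → V}
    (ℓ : ι → Module.Dual K V) (h : (Matrix.of fun i j => ℓ i (v j)).det ≠ 0) :
    LinearIndependent K v := by
  refine Fintype.linearIndependent_iff.2 fun g hg =>
    congrFun (Matrix.eq_zero_of_mulVec_eq_zero h ?_)
  ext i
  simpa [Matrix.mulVec, dotProduct, mul_comm] using congr(ℓ i $hg)

theorem linearIndependent_update_of_forall [Fintype ι] [DecidableEq ι] {u : ι → V} {m : ι}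
    {w : V} (h : ∀ (c : ι → K) (g : K), c m = 0 → ∑ i, c i • u i + g • w = 0 → c = 0 ∧ g = 0) :
    LinearIndependent K (Function.update u m w) := by
  refine Fintype.linearIndependent_iff.2 fun s hs i => ?_
  have hsum : ∑ i, Function.update s m 0 i • u i + s m • w = 0 := by
    rw [← hs, Fintype.sum_eq_add_sum_compl m, Fintype.sum_eq_add_sum_compl m]
    simp only [Function.update_self, zero_smul, zero_add]
    rw [add_comm]
    refine congrArg _ (sum_congr rfl fun i hi => ?_)
    simp [Function.update_of_ne (mem_compl.1 hi ∘ mem_singleton.2)]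
  obtain ⟨hc, hg⟩ := h _ _ (Function.update_self ..) hsum
  by_cases him : i = m
  · exact him ▸ hg
  · simpa [him] using congrFun hc i

end LinearAlgebra

section Analytic

variable {𝕜 E : Type*} [NontriviallyNormedField 𝕜] [NormedAddCommGroup E] [NormedSpace 𝕜 E]

@[fun_prop]
theorem analyticAt_fst_apply {ι F : Type*} [Fintype ι] [NormedAddCommGroup F] [NormedSpace 𝕜 F]
    (k : ι) (x : (ι → 𝕜) × F) : AnalyticAt 𝕜 (fun y : (ι → 𝕜) × F => y.1 k) x :=
  ((ContinuousLinearMap.proj k).comp (ContinuousLinearMap.fst 𝕜 _ F)).analyticAt x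

@[fun_prop]
theorem analyticAt_snd_apply {ι : Type*} [Fintype ι] (k : ι) (x : E × (ι → 𝕜)) :
    AnalyticAt 𝕜 (fun y : E × (ι → 𝕜) => y.2 k) x :=
  ((ContinuousLinearMap.proj k).comp (ContinuousLinearMap.snd 𝕜 E _)).analyticAt x

theorem AnalyticAt.matrix_det {n : Type*} [Fintype n] [DecidableEq n] {A : E → Matrix n n 𝕜}
    {x : E} (hA : ∀ i j, AnalyticAt 𝕜 (fun y => A y i j) x) :
    AnalyticAt 𝕜 (fun y => (A y).det) x := by
  simp only [Matrix.det_apply, Units.smul_def, zsmul_eq_mul]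
  exact Finset.analyticAt_fun_sum _ fun σ _ => analyticAt_const.mul
    (Finset.analyticAt_fun_prod _ fun i _ => hA _ _)

theorem AnalyticOnNhd.dense_setOf_ne_zero [PreconnectedSpace E] {F : Type*}
    [NormedAddCommGroup F] [NormedSpace 𝕜 F] {φ : E → F} (hφ : AnalyticOnNhd 𝕜 φ Set.univ)
    {x₀ : E} (hx₀ : φ x₀ ≠ 0) : Dense {x | φ x ≠ 0} := by
  show Dense {x | φ x = 0}ᶜ
  rw [← interior_eq_empty_iff_dense_compl, Set.eq_empty_iff_forall_notMem]
  intro y hy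
  exact hx₀ (hφ.eqOn_zero_of_preconnected_of_eventuallyEq_zero isPreconnected_univ
    (Set.mem_univ y) (mem_interior_iff_mem_nhds.1 hy) (Set.mem_univ x₀))

theorem dense_setOf_linearIndependent_of_analyticOnNhd [CompleteSpace 𝕜] [PreconnectedSpace E]
    {M : Type*} [NormedAddCommGroup M] [NormedSpace 𝕜 M] [FiniteDimensional 𝕜 M]
    {ι : Type*} [Fintype ι] {v : ι → E → M} (hv : ∀ i, AnalyticOnNhd 𝕜 (v i) Set.univ)
    {x₀ : E} (hx₀ : LinearIndependent 𝕜 fun i => v i x₀) :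
    Dense {x | LinearIndependent 𝕜 fun i => v i x} := by
  classical
  obtain ⟨ℓ, hℓ⟩ := hx₀.exists_dual_apply_eq_ite
  let φ : E → 𝕜 := fun x => (Matrix.of fun i j => ℓ i (v j x)).det
  have hφ : AnalyticOnNhd 𝕜 φ Set.univ := fun x _ => AnalyticAt.matrix_det fun i j =>
    (LinearMap.toContinuousLinearMap (ℓ i)).analyticAt _ |>.comp (hv j x trivial)
  have hφx₀ : φ x₀ = 1 := by
    have hone : (Matrix.of fun i j => ℓ i (v j x₀)) = 1 := by
      ext i j
      simp [hℓ, Matrix.one_apply]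
    simp only [φ, hone, Matrix.det_one]
  exact (hφ.dense_setOf_ne_zero (hφx₀ ▸ one_ne_zero)).mono fun x hx =>
    linearIndependent_of_det_dual_apply_ne_zero ℓ hx

end Analytic

section Derivatives

variable {𝕜 ι E : Type*} [NontriviallyNormedField 𝕜] [NormedAddCommGroup E] [NormedSpace 𝕜 E]

theorem hasFDerivAt_fst_apply (k : ι) (x : (ι → 𝕜) × E) :
    HasFDerivAt (fun y : (ι → 𝕜) × E => y.1 k)
      (ContinuousLinearMap.proj k ∘L ContinuousLinearMap.fst 𝕜 _ E) x :=
  (ContinuousLinearMap.proj (R := 𝕜) (φ := fun _ : ι => 𝕜) k ∘L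
    ContinuousLinearMap.fst 𝕜 (ι → 𝕜) E).hasFDerivAt

theorem hasFDerivAt_snd_apply (k : ι) (x : E × (ι → 𝕜)) :
    HasFDerivAt (fun y : E × (ι → 𝕜) => y.2 k)
      (ContinuousLinearMap.proj k ∘L ContinuousLinearMap.snd 𝕜 E _) x :=
  (ContinuousLinearMap.proj (R := 𝕜) (φ := fun _ : ι => 𝕜) k ∘L
    ContinuousLinearMap.snd 𝕜 E (ι → 𝕜)).hasFDerivAt

end Derivatives

theorem exists_ne_zero_and_linear_or_quadratic_ne_zero {n S P z₁ z₂ z₃ : ℝ} (hn : n ≠ 0)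
    (hP : P ≠ 0) (hz : ¬(z₁ = 0 ∧ z₂ = 0 ∧ z₃ = 0)) :
    ∃ t : ℝ, t ≠ 0 ∧ (n * t * z₁ + 2 * S * z₂ ≠ 0 ∨ n * t ^ 2 * z₃ - P * z₂ ≠ 0) := by
  by_contra! h
  obtain ⟨h1a, h1b⟩ := h 1 one_ne_zero
  obtain ⟨h2a, h2b⟩ := h 2 two_ne_zero
  have hz₁ : z₁ = 0 :=
    (mul_eq_zero.1 (by linear_combination h2a - h1a : n * z₁ = 0)).resolve_left hn
  have hz₃ : z₃ = 0 :=
    (mul_eq_zero.1 (by linear_combination (h2b - h1b) / 3 : n * z₃ = 0)).resolve_left hn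
  have hz₂ : z₂ = 0 :=
    (mul_eq_zero.1 (by linear_combination n * hz₃ - h1b : P * z₂ = 0)).resolve_left hP
  exact hz ⟨hz₁, hz₂, hz₃⟩

namespace Gaudin

variable {N : ℕ}

theorem analyticOnNhd_gaudinFam (a : Fin N → ℝ) (z₁ z₂ z₃ : ℝ) (i : Fin N) :
    AnalyticOnNhd ℝ (gaudinFam N a z₁ z₂ z₃ i) Set.univ := by
  intro x _
  unfold gaudinFam gaudinF gaudinG
  split_ifs <;> fun_prop

theorem fderiv_gaudinFam_eq_update (a : Fin N → ℝ) (z₁ z₂ z₃ : ℝ) (m : Fin N)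
    (hm : (m : ℕ) = N - 1) (x : (Fin N → ℝ) × (Fin N → ℝ)) :
    (fun i => fderiv ℝ (gaudinFam N a z₁ z₂ z₃ i) x) =
      Function.update (fun j => fderiv ℝ (gaudinF N a j) x) m
        (fderiv ℝ (gaudinG N z₁ z₂ z₃) x) := by
  funext i
  by_cases hi : i = m
  · subst hi
    simp [gaudinFam, hm]
  · have : (i : ℕ) < N - 1 := by
      have := i.isLt
      have := Fin.val_ne_of_ne hi
      omega
    simp [gaudinFam, hi, this]

theorem fderiv_gaudinF_apply (a : Fin N → ℝ) (j : Fin N) (x v : (Fin N → ℝ) × (Fin N → ℝ)) :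
    fderiv ℝ (gaudinF N a j) x v = ∑ k ∈ univ.erase j,
      2 * (x.1 k * x.2 j - x.1 j * x.2 k) / (a k - a j) *
        (v.1 k * x.2 j + x.1 k * v.2 j - v.1 j * x.2 k - x.1 j * v.2 k) := by
  have h := HasFDerivAt.fun_sum (u := univ.erase j) fun k _ =>
    ((((hasFDerivAt_fst_apply k x).mul (hasFDerivAt_snd_apply j x)).sub
      ((hasFDerivAt_fst_apply j x).mul (hasFDerivAt_snd_apply k x))).pow 2).mul_const
        (a k - a j)⁻¹
  simp only [← div_eq_mul_inv] at h
  rw [(show HasFDerivAt (gaudinF N a j) _ x from h).fderiv]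
  simp only [Pi.sub_apply, Pi.mul_apply, Nat.add_one_sub_one, pow_one, nsmul_eq_mul,
    Nat.cast_ofNat, _root_.sum_apply, smul_apply, sub_apply, add_apply,
    ContinuousLinearMap.comp_apply, ContinuousLinearMap.coe_snd', ContinuousLinearMap.coe_fst',
    ContinuousLinearMap.proj_apply, smul_eq_mul]
  exact sum_congr rfl fun k _ => by ring

theorem fderiv_gaudinG_apply (z₁ z₂ z₃ : ℝ) (x v : (Fin N → ℝ) × (Fin N → ℝ)) :
    fderiv ℝ (gaudinG N z₁ z₂ z₃) x v = ∑ j,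
      ((z₁ * x.2 j + 2 * z₂ * x.1 j) * v.1 j + (z₁ * x.1 j + 2 * z₃ * x.2 j) * v.2 j) := by
  have hp := fun j => hasFDerivAt_fst_apply j x
  have hq := fun j => hasFDerivAt_snd_apply j x
  have h := (((HasFDerivAt.fun_sum (u := univ) fun j _ => (hp j).mul (hq j)).const_mul z₁).add
    ((HasFDerivAt.fun_sum (u := univ) fun j _ => (hp j).pow 2).const_mul z₂)).add
    ((HasFDerivAt.fun_sum (u := univ) fun j _ => (hq j).pow 2).const_mul z₃)
  rw [(show HasFDerivAt (gaudinG N z₁ z₂ z₃) _ x from h).fderiv]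
  simp only [Nat.add_one_sub_one, pow_one, nsmul_eq_mul, Nat.cast_ofNat, add_apply, smul_apply,
    _root_.sum_apply, ContinuousLinearMap.comp_apply, ContinuousLinearMap.coe_snd',
    ContinuousLinearMap.coe_fst', ContinuousLinearMap.proj_apply, smul_eq_mul, mul_sum,
    ← sum_add_distrib]
  exact sum_congr rfl fun j _ => by ring

theorem fderiv_gaudinF_apply_const_snd {a : Fin N → ℝ} (ha : Function.Injective a) (j : Fin N)
    (t : ℝ) (v : (Fin N → ℝ) × (Fin N → ℝ)) :
    fderiv ℝ (gaudinF N a j) (a, fun _ => t) v =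
      2 * t * (t * ∑ k, v.1 k + (∑ k, a k) * v.2 j - N * t * v.1 j - a j * ∑ k, v.2 k) := by
  have hterm : ∀ k, (2 * (a k * t - a j * t) / (a k - a j)) *
      (v.1 k * t + a k * v.2 j - v.1 j * t - a j * v.2 k) =
        2 * t * (t * v.1 k + a k * v.2 j - t * v.1 j - a j * v.2 k) := by
    intro k
    rcases eq_or_ne k j with rfl | hkj
    · ring
    · rw [← mul_sub_right_distrib, mul_div_assoc,
        mul_div_cancel_left₀ _ (sub_ne_zero.2 (ha.ne hkj))]
      ring
  rw [fderiv_gaudinF_apply]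
  simp only [hterm]
  rw [sum_erase _ (by ring), ← mul_sum]
  simp only [sum_sub_distrib, sum_add_distrib, ← mul_sum, ← sum_mul, sum_const, card_univ,
    Fintype.card_fin, nsmul_eq_mul]
  ring

theorem relations_of_sum_fderiv_eq_zero {a : Fin N → ℝ} (ha : Function.Injective a)
    (t z₁ z₂ z₃ : ℝ) (c : Fin N → ℝ) (g : ℝ)
    (h : ∑ j, c j • fderiv ℝ (gaudinF N a j) (a, fun _ => t) +
      g • fderiv ℝ (gaudinG N z₁ z₂ z₃) (a, fun _ => t) = 0) :
    (∀ k, 2 * t ^ 2 * (∑ j, c j - N * c k) + g * (z₁ * t + 2 * z₂ * a k) = 0) ∧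
      ∀ k, 2 * t * ((∑ j, a j) * c k - ∑ j, c j * a j) + g * (z₁ * a k + 2 * z₃ * t) = 0 := by
  have hv : ∀ v : (Fin N → ℝ) × (Fin N → ℝ), ∑ j, c j * (2 * t * (t * ∑ k, v.1 k +
      (∑ k, a k) * v.2 j - N * t * v.1 j - a j * ∑ k, v.2 k)) + g * ∑ j,
        ((z₁ * t + 2 * z₂ * a j) * v.1 j + (z₁ * a j + 2 * z₃ * t) * v.2 j) = 0 := fun v => by
    simpa [fderiv_gaudinF_apply_const_snd ha, fderiv_gaudinG_apply] using congr($h v)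
  refine ⟨fun k => ?_, fun k => ?_⟩
  · have hk := hv (Pi.single k 1, 0)
    simp only [Pi.single_apply, sum_ite_eq', mem_univ, ↓reduceIte, mul_one, Pi.zero_apply,
      mul_zero, add_zero, mul_ite, sum_const_zero, sub_zero, mul_sub, sum_sub_distrib,
      ← sum_mul] at hk
    linear_combination hk
  · have hk := hv (0, Pi.single k 1)
    simp only [Pi.zero_apply, sum_const_zero, mul_zero, Pi.single_apply, mul_ite, mul_one,
      zero_add, sub_zero, sum_ite_eq', mem_univ, ↓reduceIte, mul_sub, sum_sub_distrib] at hk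
    rw [show ∑ j, c j * (2 * t * a j) = 2 * t * ∑ j, c j * a j by
      rw [mul_sum]; exact sum_congr rfl fun j _ => by ring] at hk
    linear_combination hk

theorem relations_imp_mul_eq_zero (a c : Fin N → ℝ) (g t z₁ z₂ z₃ : ℝ)
    (hp : ∀ k, 2 * t ^ 2 * (∑ j, c j - N * c k) + g * (z₁ * t + 2 * z₂ * a k) = 0)
    (hq : ∀ k, 2 * t * ((∑ j, a j) * c k - ∑ j, c j * a j) + g * (z₁ * a k + 2 * z₃ * t) = 0) :
    (∀ k l, g * (N * t * z₁ + 2 * (∑ j, a j) * z₂) * (a k - a l) = 0) ∧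
      g * (N * t ^ 2 * z₃ - (∑ j, a j ^ 2) * z₂) = 0 := by
  refine ⟨fun k l => ?_, ?_⟩
  · linear_combination (∑ j, a j) * (hp k - hp l) + N * t * (hq k - hq l)
  have hpa : ∑ k, ((2 * t ^ 2 * ∑ j, c j + g * z₁ * t) * a k + (-2 * t ^ 2 * N) * (c k * a k)
      + 2 * g * z₂ * a k ^ 2) = 0 :=
    sum_eq_zero fun k _ => by linear_combination a k * hp k
  have hqs : ∑ k, (2 * t * (∑ j, a j) * c k + g * z₁ * a k
      + (2 * g * z₃ * t - 2 * t * ∑ j, c j * a j)) = 0 :=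
    sum_eq_zero fun k _ => by linear_combination hq k
  rw [sum_add_distrib, sum_add_distrib, ← mul_sum, ← mul_sum, ← mul_sum] at hpa
  rw [sum_add_distrib, sum_add_distrib, ← mul_sum, ← mul_sum, sum_const, card_univ,
    Fintype.card_fin, nsmul_eq_mul] at hqs
  linear_combination (t * hqs - hpa) / 2

theorem exists_linearIndependent_fderiv (hN : 2 ≤ N) {a : Fin N → ℝ}
    (ha : Function.Injective a) {z₁ z₂ z₃ : ℝ} (hz : ¬(z₁ = 0 ∧ z₂ = 0 ∧ z₃ = 0)) (m : Fin N) :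
    ∃ x₀, LinearIndependent ℝ (Function.update (fun j => fderiv ℝ (gaudinF N a j) x₀) m
      (fderiv ℝ (gaudinG N z₁ z₂ z₃) x₀)) := by
  have hN₀ : (N : ℝ) ≠ 0 := Nat.cast_ne_zero.2 (by omega)
  have ha₀₁ : a ⟨0, by omega⟩ - a ⟨1, by omega⟩ ≠ 0 := sub_ne_zero.2 (ha.ne (by simp))
  have hP : ∑ j, a j ^ 2 ≠ 0 := fun h => by
    have ha₀ : ∀ j, a j = 0 := fun j => pow_eq_zero_iff two_ne_zero |>.1 <|
      (sum_eq_zero_iff_of_nonneg fun j _ => sq_nonneg (a j)).1 h j (mem_univ j)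
    exact ha₀₁ (by rw [ha₀, ha₀, sub_self])
  obtain ⟨t, ht, hdeg⟩ :=
    exists_ne_zero_and_linear_or_quadratic_ne_zero (S := ∑ j, a j) hN₀ hP hz
  refine ⟨(a, fun _ => t), linearIndependent_update_of_forall fun c g hcm hsum => ?_⟩
  obtain ⟨hp, hq⟩ := relations_of_sum_fderiv_eq_zero ha t z₁ z₂ z₃ c g hsum
  obtain ⟨hlin, hquad⟩ := relations_imp_mul_eq_zero a c g t z₁ z₂ z₃ hp hq
  obtain rfl : g = 0 := by
    rcases hdeg with hd | hd
    · simpa [hd, ha₀₁] using hlin ⟨0, by omega⟩ ⟨1, by omega⟩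
    · simpa [hd] using hquad
  have hc : ∀ k, (N : ℝ) * c k = ∑ j, c j := fun k => by
    simpa [ht, sub_eq_zero, eq_comm] using hp k
  refine ⟨funext fun k => ?_, rfl⟩
  simpa [hcm, hN₀] using (hc k).trans (hc m).symm

end Gaudin

open Gaudin in
theorem stmt6 (N : ℕ) (hN : 2 ≤ N) (a : Fin N → ℝ) (ha : Function.Injective a)
    (z₁ z₂ z₃ : ℝ) (hz : ¬(z₁ = 0 ∧ z₂ = 0 ∧ z₃ = 0)) :
    IsOpen (indepSet N a z₁ z₂ z₃) ∧ Dense (indepSet N a z₁ z₂ z₃) := by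
  have hd : ∀ i, AnalyticOnNhd ℝ (fderiv ℝ (gaudinFam N a z₁ z₂ z₃ i)) Set.univ := fun i =>
    (analyticOnNhd_gaudinFam a z₁ z₂ z₃ i).fderiv
  refine ⟨isOpen_setOfPred_linearIndependent.preimage
    (continuous_pi fun i => continuousOn_univ.1 (hd i).continuousOn), ?_⟩
  obtain ⟨x₀, hx₀⟩ := exists_linearIndependent_fderiv hN ha hz ⟨N - 1, by omega⟩
  rw [← fderiv_gaudinFam_eq_update a z₁ z₂ z₃ _ rfl] at hx₀
  exact dense_setOf_linearIndependent_of_analyticOnNhd hd hx₀
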